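/- Let γ > 0 and 𝓜 ⊂ ℝ³ be a finite set of models such that for each M = (a,b,c) ∈ 𝓜 the Riccati equation P_M = (a²/(P_M + γ²c² − 1) + γ⁻²)⁻¹ has a positive solution P_M with P_M + γ²c² − 1 > 0. Then the following are equivalent: (i) there exists a causal output-feedback control policy μ* such that the closed-loop system is finite gain for every M ∈ 𝓜; (ii) there exists an observer-based control policy η*, i.e. a map producing u(t) = η*({(x̂_M(t), l_M(t+1)) : M ∈ 𝓜}, y(t)) from the current observer states, past costs and measurement, such that for every t ≥ 0 and every real sequence y(0),…,y(t), the past costs generated by the observer recursions under this policy satisfy l_M(t+1) ≤ 0 for all M ∈ 𝓜. Moreover, if η* satisfies (ii), then the causal policy μ*_t(y(0),…,y(t)) = η*({(x̂_M(t), l_M(t+1)) : M ∈ 𝓜}, y(t)) satisfies (i). -/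

import Mathlib

/- Models are triples `M = (a, b, c)` with `a = M.1`, `b = M.2.1`, `c = M.2.2`. -/

/-- Observer coefficient `â_M = a P_M / (P_M + γ²c² − 1)`. -/
noncomputable def ahat (γ : ℝ) (P : ℝ × ℝ × ℝ → ℝ) (M : ℝ × ℝ × ℝ) : ℝ :=
  M.1 * P M / (P M + γ ^ 2 * M.2.2 ^ 2 - 1)

/-- Observer coefficient `ĝ_M = γ² a c / (P_M + γ²c² − 1)`. -/
noncomputable def ghat (γ : ℝ) (P : ℝ × ℝ × ℝ → ℝ) (M : ℝ × ℝ × ℝ) : ℝ :=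
  γ ^ 2 * M.1 * M.2.2 / (P M + γ ^ 2 * M.2.2 ^ 2 - 1)

/-- One step of the past-cost recursion:
`l⁺ = l − P_M x̂² − γ² y² + (P_M x̂ + γ² c y)² / (P_M + γ²c² − 1)`. -/
noncomputable def lstep (γ : ℝ) (P : ℝ × ℝ × ℝ → ℝ) (M : ℝ × ℝ × ℝ)
    (xh l yt : ℝ) : ℝ :=
  l - P M * xh ^ 2 - γ ^ 2 * yt ^ 2
    + (P M * xh + γ ^ 2 * M.2.2 * yt) ^ 2 / (P M + γ ^ 2 * M.2.2 ^ 2 - 1)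

/-- Closed-loop observer/past-cost state under the observer-based policy `η`:
`clState γ P η y t M = (x̂_M(t), l_M(t))`, where at each step the control signal is
`u(t) = η (fun M => (x̂_M(t), l_M(t+1))) (y t)`. -/
noncomputable def clState (γ : ℝ) (P : ℝ × ℝ × ℝ → ℝ)
    (η : ((ℝ × ℝ × ℝ) → ℝ × ℝ) → ℝ → ℝ) (y : ℕ → ℝ) :
    ℕ → (ℝ × ℝ × ℝ) → ℝ × ℝ
  | 0 => fun _ => (0, 0)
  | t + 1 => fun M =>
      let s := clState γ P η y t
      let u := η (fun M' => ((s M').1, lstep γ P M' (s M').1 (s M').2 (y t))) (y t)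
      (ahat γ P M * (s M).1 + M.2.1 * u + ghat γ P M * y t,
        lstep γ P M (s M).1 (s M).2 (y t))

/-- The closed-loop control signal produced by the observer-based policy `η`:
`u(t) = η ({(x̂_M(t), l_M(t+1)) : M}, y(t))`. -/
noncomputable def clU (γ : ℝ) (P : ℝ × ℝ × ℝ → ℝ)
    (η : ((ℝ × ℝ × ℝ) → ℝ × ℝ) → ℝ → ℝ) (y : ℕ → ℝ) (t : ℕ) : ℝ :=
  η (fun M => ((clState γ P η y t M).1,
      lstep γ P M (clState γ P η y t M).1 (clState γ P η y t M).2 (y t))) (y t)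

/-- A causal output-feedback control policy: `μ t y` only depends on `y 0, …, y t`. -/
def Causal (μ : ℕ → (ℕ → ℝ) → ℝ) : Prop :=
  ∀ t (y y' : ℕ → ℝ), (∀ s ≤ t, y s = y' s) → μ t y = μ t y'

/-- The closed loop `x(t+1) = a x(t) + b u(t) + w(t)`, `y(t) = c x(t) + v(t)` with
`u(t) = μ t y` is finite gain for model `M`: for every `T`, every disturbance `w`,
noise `v` and initial state `x 0`,
`Σ_{τ≤T+1} x(τ)² − γ² Σ_{τ≤T} w(τ)² − γ² Σ_{τ≤T+1} v(τ)² − P_M x(0)² ≤ 0`. -/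
def FiniteGain (γ : ℝ) (P : ℝ × ℝ × ℝ → ℝ) (M : ℝ × ℝ × ℝ)
    (μ : ℕ → (ℕ → ℝ) → ℝ) : Prop :=
  ∀ x w v y : ℕ → ℝ,
    (∀ τ, x (τ + 1) = M.1 * x τ + M.2.1 * μ τ y + w τ) →
    (∀ τ, y τ = M.2.2 * x τ + v τ) →
    ∀ T : ℕ,
      ∑ τ ∈ Finset.range (T + 2), (x τ) ^ 2
        - γ ^ 2 * ∑ τ ∈ Finset.range (T + 1), (w τ) ^ 2
        - γ ^ 2 * ∑ τ ∈ Finset.range (T + 2), (v τ) ^ 2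
        - P M * (x 0) ^ 2 ≤ 0


/-!
For a model `M` with state `x`, the quantity `V(t) = l_M(t) − P_M (x(t) − x̂_M(t))²` is a storage
function: completing squares and using the Riccati equation,
`V(t+1) − V(t) = x(t)² − γ² w(t)² − γ² v(t)² + γ² (P_M a e(t+1) − K(t))² / (P_M X)`, where
`X = P_M + γ²c² − 1`, `e = x − x̂_M` and `K(t) = X x(t) − P_M x̂_M(t) − γ² c y(t)`.
Summing, the finite-gain sum up to `T` is at most `l_M(T+2)`, so nonpositive past costs give finite
gain. Conversely, given measurements `y(0), …, y(t)`, run `X x(τ) = P_M a e(τ+1) + P_M x̂_M(τ) + γ² c y(τ)`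
backwards from `x(t+1) = x̂_M(t+1)`, which makes every remainder vanish, and measure `c x(t+1)` at
time `t+1`; the finite-gain inequality then reads `l_M(t+1) + x(t+1)² ≤ 0`.

A causal policy `μ` becomes an observer-based one by applying `μ` to any measurement history that
produces the observer information at hand; by induction the closed-loop observer states then agree
with those of `μ` along some history, whose past costs are nonpositive.
-/

open Finset

theorem riccati_pos {γ a p X : ℝ} (hγ : γ ≠ 0) (hX : 0 < X)
    (h : p = (a ^ 2 / X + (γ ^ 2)⁻¹)⁻¹) : 0 < p := by
  rw [h]
  positivity

theorem riccati_mul_eq {γ a p X : ℝ} (hγ : γ ≠ 0) (hX : 0 < X)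
    (h : p = (a ^ 2 / X + (γ ^ 2)⁻¹)⁻¹) : p * (γ ^ 2 * a ^ 2 + X) = γ ^ 2 * X := by
  have hs : a ^ 2 / X + (γ ^ 2)⁻¹ ≠ 0 := by positivity
  rw [h]
  field_simp

theorem riccati_complete_square {γ p a X w e K : ℝ} (hp : p ≠ 0) (hX : X ≠ 0)
    (hR : p * (γ ^ 2 * a ^ 2 + X) = γ ^ 2 * X) (he : X * e = X * w + a * K) :
    γ ^ 2 * w ^ 2 + K ^ 2 / X - p * e ^ 2 = γ ^ 2 * (p * a * e - K) ^ 2 / (p * X) := by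
  have hw : w = e - a * K / X := by field_simp; linarith
  subst hw
  field_simp
  linear_combination (K ^ 2 - p * X * e ^ 2) * hR

theorem gainSum_eq (γ p : ℝ) (x w v : ℕ → ℝ) (T : ℕ) :
    ∑ τ ∈ range (T + 2), x τ ^ 2 - γ ^ 2 * ∑ τ ∈ range (T + 1), w τ ^ 2
      - γ ^ 2 * ∑ τ ∈ range (T + 2), v τ ^ 2 - p * x 0 ^ 2
      = ∑ τ ∈ range (T + 1), (x τ ^ 2 - γ ^ 2 * w τ ^ 2 - γ ^ 2 * v τ ^ 2)
        + (x (T + 1) ^ 2 - γ ^ 2 * v (T + 1) ^ 2) - p * x 0 ^ 2 := by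
  simp only [sum_range_succ _ (T + 1), sum_sub_distrib, ← mul_sum]
  ring

theorem exists_seq_backward {α : Type*} (f : ℕ → α → α) (N : ℕ) (a : α) :
    ∃ x : ℕ → α, x N = a ∧ ∀ τ < N, x τ = f τ (x (τ + 1)) := by
  induction N generalizing f with
  | zero => exact ⟨fun _ => a, rfl, fun τ h => absurd h τ.not_lt_zero⟩
  | succ N ih =>
    obtain ⟨x, hN, hx⟩ := ih (fun τ => f (τ + 1))
    refine ⟨fun τ => Nat.casesOn τ (f 0 (x 0)) x, hN, fun τ hτ => ?_⟩
    cases τ with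
    | zero => rfl
    | succ τ => exact hx τ (by omega)

noncomputable def obsDenom (γ : ℝ) (P : ℝ × ℝ × ℝ → ℝ) (M : ℝ × ℝ × ℝ) : ℝ :=
  P M + γ ^ 2 * M.2.2 ^ 2 - 1

noncomputable def observer (γ : ℝ) (P : ℝ × ℝ × ℝ → ℝ) (M : ℝ × ℝ × ℝ) (u y : ℕ → ℝ) :
    ℕ → ℝ × ℝ
  | 0 => (0, 0)
  | t + 1 => (ahat γ P M * (observer γ P M u y t).1 + M.2.1 * u t + ghat γ P M * y t,
      lstep γ P M (observer γ P M u y t).1 (observer γ P M u y t).2 (y t))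

noncomputable def storage (γ : ℝ) (P : ℝ × ℝ × ℝ → ℝ) (M : ℝ × ℝ × ℝ) (u y x : ℕ → ℝ)
    (t : ℕ) : ℝ :=
  (observer γ P M u y t).2 - P M * (x t - (observer γ P M u y t).1) ^ 2

section Model

variable {γ : ℝ} {P : ℝ × ℝ × ℝ → ℝ} {M : ℝ × ℝ × ℝ}

theorem lstep_sub_storage (hX : obsDenom γ P M ≠ 0) (x xh l y : ℝ) :
    lstep γ P M xh l y - (l - P M * (x - xh) ^ 2)
      = x ^ 2 - γ ^ 2 * (y - M.2.2 * x) ^ 2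
        + (obsDenom γ P M * x - P M * xh - γ ^ 2 * M.2.2 * y) ^ 2 / obsDenom γ P M := by
  unfold lstep
  unfold obsDenom at *
  field_simp
  ring

theorem obsDenom_mul_error_succ (hX : obsDenom γ P M ≠ 0) (x xh u w y : ℝ) :
    obsDenom γ P M
        * ((M.1 * x + M.2.1 * u + w) - (ahat γ P M * xh + M.2.1 * u + ghat γ P M * y))
      = obsDenom γ P M * w
        + M.1 * (obsDenom γ P M * x - P M * xh - γ ^ 2 * M.2.2 * y) := by
  unfold ahat ghat
  unfold obsDenom at *
  field_simp
  ring

theorem storage_succ_sub (hγ : γ ≠ 0) (hX : 0 < obsDenom γ P M)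
    (hRic : P M = (M.1 ^ 2 / obsDenom γ P M + (γ ^ 2)⁻¹)⁻¹) {x xh l u w v y x' xh' : ℝ}
    (hdyn : x' = M.1 * x + M.2.1 * u + w) (hmeas : y = M.2.2 * x + v)
    (hobs : xh' = ahat γ P M * xh + M.2.1 * u + ghat γ P M * y) :
    (lstep γ P M xh l y - P M * (x' - xh') ^ 2) - (l - P M * (x - xh) ^ 2)
      = x ^ 2 - γ ^ 2 * w ^ 2 - γ ^ 2 * v ^ 2
        + γ ^ 2 * (P M * M.1 * (x' - xh')
            - (obsDenom γ P M * x - P M * xh - γ ^ 2 * M.2.2 * y)) ^ 2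
          / (P M * obsDenom γ P M) := by
  have hsq := riccati_complete_square (riccati_pos hγ hX hRic).ne' hX.ne'
    (riccati_mul_eq hγ hX hRic) (hdyn ▸ hobs ▸ obsDenom_mul_error_succ hX.ne' x xh u w y)
  have hv : y - M.2.2 * x = v := by rw [hmeas]; ring
  rw [← hsq, sub_right_comm, lstep_sub_storage hX.ne', hv]
  ring

theorem observer_congr {u u' y y' : ℕ → ℝ} {t : ℕ} (hu : ∀ τ < t, u τ = u' τ)
    (hy : ∀ τ < t, y τ = y' τ) : observer γ P M u y t = observer γ P M u' y' t := by
  induction t with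
  | zero => rfl
  | succ t ih =>
    rw [observer, observer, ih (fun τ hτ => hu τ (by omega)) (fun τ hτ => hy τ (by omega)),
      hu t t.lt_succ_self, hy t t.lt_succ_self]

theorem storage_zero (u y x : ℕ → ℝ) : storage γ P M u y x 0 = -(P M * x 0 ^ 2) := by
  simp [storage, observer]

theorem supply_le_storage_succ_sub (hγ : γ ≠ 0) (hX : 0 < obsDenom γ P M)
    (hRic : P M = (M.1 ^ 2 / obsDenom γ P M + (γ ^ 2)⁻¹)⁻¹) {u y x w v : ℕ → ℝ} {τ : ℕ}
    (hdyn : x (τ + 1) = M.1 * x τ + M.2.1 * u τ + w τ) (hmeas : y τ = M.2.2 * x τ + v τ) :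
    x τ ^ 2 - γ ^ 2 * w τ ^ 2 - γ ^ 2 * v τ ^ 2
      ≤ storage γ P M u y x (τ + 1) - storage γ P M u y x τ := by
  simp only [storage, observer]
  rw [storage_succ_sub hγ hX hRic hdyn hmeas rfl, le_add_iff_nonneg_right]
  have := riccati_pos hγ hX hRic
  positivity

theorem supply_eq_storage_succ_sub (hγ : γ ≠ 0) (hX : 0 < obsDenom γ P M)
    (hRic : P M = (M.1 ^ 2 / obsDenom γ P M + (γ ^ 2)⁻¹)⁻¹) {u y x w v : ℕ → ℝ} {τ : ℕ}
    (hdyn : x (τ + 1) = M.1 * x τ + M.2.1 * u τ + w τ) (hmeas : y τ = M.2.2 * x τ + v τ)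
    (hopt : obsDenom γ P M * x τ
      = P M * M.1 * (x (τ + 1) - (observer γ P M u y (τ + 1)).1)
        + P M * (observer γ P M u y τ).1 + γ ^ 2 * M.2.2 * y τ) :
    x τ ^ 2 - γ ^ 2 * w τ ^ 2 - γ ^ 2 * v τ ^ 2
      = storage γ P M u y x (τ + 1) - storage γ P M u y x τ := by
  simp only [storage, observer] at hopt ⊢
  rw [storage_succ_sub hγ hX hRic hdyn hmeas rfl, hopt]
  ring

theorem sq_sub_le_pastCost_sub_storage (hX : 0 < obsDenom γ P M) {u y x v : ℕ → ℝ} {τ : ℕ}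
    (hmeas : y τ = M.2.2 * x τ + v τ) :
    x τ ^ 2 - γ ^ 2 * v τ ^ 2 ≤ (observer γ P M u y (τ + 1)).2 - storage γ P M u y x τ := by
  have hv : y τ - M.2.2 * x τ = v τ := by rw [hmeas]; ring
  simp only [storage, observer]
  rw [lstep_sub_storage hX.ne', hv, le_add_iff_nonneg_right]
  positivity

theorem gainSum_le_pastCost (hγ : γ ≠ 0) (hX : 0 < obsDenom γ P M)
    (hRic : P M = (M.1 ^ 2 / obsDenom γ P M + (γ ^ 2)⁻¹)⁻¹) {u y x w v : ℕ → ℝ}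
    (hdyn : ∀ τ, x (τ + 1) = M.1 * x τ + M.2.1 * u τ + w τ)
    (hmeas : ∀ τ, y τ = M.2.2 * x τ + v τ) (T : ℕ) :
    ∑ τ ∈ range (T + 2), x τ ^ 2 - γ ^ 2 * ∑ τ ∈ range (T + 1), w τ ^ 2
      - γ ^ 2 * ∑ τ ∈ range (T + 2), v τ ^ 2 - P M * x 0 ^ 2
      ≤ (observer γ P M u y (T + 2)).2 := by
  have hsupply : ∑ τ ∈ range (T + 1), (x τ ^ 2 - γ ^ 2 * w τ ^ 2 - γ ^ 2 * v τ ^ 2)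
      ≤ storage γ P M u y x (T + 1) - storage γ P M u y x 0 := by
    rw [← sum_range_sub]
    exact sum_le_sum fun τ _ => supply_le_storage_succ_sub hγ hX hRic (hdyn τ) (hmeas τ)
  have hlast := sq_sub_le_pastCost_sub_storage (u := u) hX (hmeas (T + 1))
  rw [gainSum_eq, storage_zero] at *
  linarith

theorem pastCost_nonpos_of_finiteGain (hγ : γ ≠ 0) (hX : 0 < obsDenom γ P M)
    (hRic : P M = (M.1 ^ 2 / obsDenom γ P M + (γ ^ 2)⁻¹)⁻¹) {μ : ℕ → (ℕ → ℝ) → ℝ}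
    (hμ : Causal μ) (hfg : FiniteGain γ P M μ) (y : ℕ → ℝ) :
    ∀ t, (observer γ P M (fun τ => μ τ y) y t).2 ≤ 0
  | 0 => le_rfl
  | t + 1 => by
    set s := observer γ P M (fun τ => μ τ y) y
    obtain ⟨x, hx_end, hx_opt⟩ := exists_seq_backward
      (fun τ ξ => (P M * M.1 * (ξ - (s (τ + 1)).1) + P M * (s τ).1 + γ ^ 2 * M.2.2 * y τ)
        / obsDenom γ P M) (t + 1) (s (t + 1)).1
    set z := Function.update y (t + 1) (M.2.2 * x (t + 1))
    set w := fun τ => x (τ + 1) - M.1 * x τ - M.2.1 * μ τ z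
    set v := fun τ => z τ - M.2.2 * x τ
    have hzy : ∀ τ ≤ t, z τ = y τ := fun τ hτ => Function.update_of_ne (by omega) _ _
    have hsupply : ∑ τ ∈ range (t + 1), (x τ ^ 2 - γ ^ 2 * w τ ^ 2 - γ ^ 2 * v τ ^ 2)
        = storage γ P M (fun τ => μ τ y) y x (t + 1)
          - storage γ P M (fun τ => μ τ y) y x 0 := by
      rw [← sum_range_sub]
      refine sum_congr rfl fun τ hτ => ?_
      have hτ : τ ≤ t := Nat.lt_succ_iff.mp (mem_range.mp hτ)
      have hμzy : μ τ z = μ τ y := hμ τ z y fun σ hσ => hzy σ (hσ.trans hτ)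
      refine supply_eq_storage_succ_sub hγ hX hRic (by simp only [w, hμzy]; ring)
        (by simp only [v, hzy τ hτ]; ring) ?_
      rw [hx_opt τ (by omega), mul_div_cancel₀ _ hX.ne']
    have hFG := hfg x w v z (fun τ => by ring) (fun τ => by ring) t
    have hv_end : v (t + 1) = 0 := by simp [v, z]
    have hstorage_end : storage γ P M (fun τ => μ τ y) y x (t + 1) = (s (t + 1)).2 := by
      simp [storage, s, hx_end]
    rw [gainSum_eq, hsupply, storage_zero, hstorage_end, hv_end] at hFG
    nlinarith [sq_nonneg (x (t + 1))]

theorem finiteGain_iff_pastCost_nonpos (hγ : γ ≠ 0) (hX : 0 < obsDenom γ P M)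
    (hRic : P M = (M.1 ^ 2 / obsDenom γ P M + (γ ^ 2)⁻¹)⁻¹) {μ : ℕ → (ℕ → ℝ) → ℝ}
    (hμ : Causal μ) :
    FiniteGain γ P M μ ↔ ∀ y t, (observer γ P M (fun τ => μ τ y) y t).2 ≤ 0 :=
  ⟨pastCost_nonpos_of_finiteGain hγ hX hRic hμ, fun h _ _ _ y hdyn hmeas T =>
    (gainSum_le_pastCost hγ hX hRic hdyn hmeas T).trans (h y (T + 2))⟩

end Model

section ClosedLoop

variable {γ : ℝ} {P : ℝ × ℝ × ℝ → ℝ}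

theorem clState_succ (η : ((ℝ × ℝ × ℝ) → ℝ × ℝ) → ℝ → ℝ) (y : ℕ → ℝ) (t : ℕ)
    (M : ℝ × ℝ × ℝ) :
    clState γ P η y (t + 1) M
      = (ahat γ P M * (clState γ P η y t M).1 + M.2.1 * clU γ P η y t + ghat γ P M * y t,
        lstep γ P M (clState γ P η y t M).1 (clState γ P η y t M).2 (y t)) :=
  rfl

theorem clState_apply_eq_observer (η : ((ℝ × ℝ × ℝ) → ℝ × ℝ) → ℝ → ℝ) (y : ℕ → ℝ)
    (M : ℝ × ℝ × ℝ) (t : ℕ) :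
    clState γ P η y t M = observer γ P M (fun τ => clU γ P η y τ) y t := by
  induction t with
  | zero => rfl
  | succ t ih => rw [clState_succ, ih]; rfl

theorem clState_congr (η : ((ℝ × ℝ × ℝ) → ℝ × ℝ) → ℝ → ℝ) {y y' : ℕ → ℝ} {t : ℕ}
    (h : ∀ τ < t, y τ = y' τ) : clState γ P η y t = clState γ P η y' t := by
  induction t with
  | zero => rfl
  | succ t ih => simp only [clState, ih fun τ hτ => h τ (by omega), h t t.lt_succ_self]

theorem causal_clU (η : ((ℝ × ℝ × ℝ) → ℝ × ℝ) → ℝ → ℝ) :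
    Causal (fun t y => clU γ P η y t) := fun t y y' h => by
  simp only [clU, clState_congr η fun τ hτ => h τ hτ.le, h t le_rfl]

noncomputable def infoState (γ : ℝ) (P : ℝ × ℝ × ℝ → ℝ) (s : (ℝ × ℝ × ℝ) → ℝ × ℝ)
    (yt : ℝ) : (ℝ × ℝ × ℝ) → ℝ × ℝ :=
  fun M => ((s M).1, lstep γ P M (s M).1 (s M).2 yt)

open Classical in
noncomputable def toObserverPolicy (γ : ℝ) (P : ℝ × ℝ × ℝ → ℝ) (μ : ℕ → (ℕ → ℝ) → ℝ) :
    ((ℝ × ℝ × ℝ) → ℝ × ℝ) → ℝ → ℝ := fun f yt =>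
  if h : ∃ p : ℕ × (ℕ → ℝ),
      infoState γ P (fun M => observer γ P M (fun τ => μ τ p.2) p.2 p.1) yt = f ∧ p.2 p.1 = yt
  then μ h.choose.1 h.choose.2 else 0

theorem exists_clState_toObserverPolicy_eq {μ : ℕ → (ℕ → ℝ) → ℝ} (hμ : Causal μ)
    (y : ℕ → ℝ) (t : ℕ) :
    ∃ (t' : ℕ) (y' : ℕ → ℝ), y' t' = y t ∧
      clState γ P (toObserverPolicy γ P μ) y t
        = fun M => observer γ P M (fun τ => μ τ y') y' t' := by
  induction t with
  | zero => exact ⟨0, y, rfl, rfl⟩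
  | succ t ih =>
    obtain ⟨t', y', hy', hst⟩ := ih
    have hex : ∃ p : ℕ × (ℕ → ℝ),
        infoState γ P (fun M => observer γ P M (fun τ => μ τ p.2) p.2 p.1) (y t)
          = infoState γ P (clState γ P (toObserverPolicy γ P μ) y t) (y t) ∧ p.2 p.1 = y t :=
      ⟨(t', y'), by rw [hst], hy'⟩
    obtain ⟨hinfo, hy₂⟩ := hex.choose_spec
    have hu : clU γ P (toObserverPolicy γ P μ) y t = μ hex.choose.1 hex.choose.2 := dif_pos hex
    refine ⟨hex.choose.1 + 1, Function.update hex.choose.2 (hex.choose.1 + 1) (y (t + 1)),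
      by simp, funext fun M => ?_⟩
    rw [observer_congr (fun τ hτ => hμ τ _ _ fun σ hσ => Function.update_of_ne (by omega) _ _)
      fun τ hτ => Function.update_of_ne (by omega) _ _]
    have hM := Prod.ext_iff.mp (congrFun hinfo M)
    simp only [infoState] at hM
    rw [clState_succ, hu, observer, hy₂, hM.2, hM.1]

end ClosedLoop

theorem observer_based_feedback_general
    (γ : ℝ) (hγ : 0 < γ) (𝓜 : Finset (ℝ × ℝ × ℝ))
    (P : ℝ × ℝ × ℝ → ℝ)
    (hXpos : ∀ M ∈ 𝓜, 0 < P M + γ ^ 2 * M.2.2 ^ 2 - 1)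
    (hRic : ∀ M ∈ 𝓜,
      P M = (M.1 ^ 2 / (P M + γ ^ 2 * M.2.2 ^ 2 - 1) + (γ ^ 2)⁻¹)⁻¹) :
    ((∃ μ : ℕ → (ℕ → ℝ) → ℝ, Causal μ ∧ ∀ M ∈ 𝓜, FiniteGain γ P M μ) ↔
      (∃ η : ((ℝ × ℝ × ℝ) → ℝ × ℝ) → ℝ → ℝ,
        ∀ y : ℕ → ℝ, ∀ t : ℕ, ∀ M ∈ 𝓜, (clState γ P η y (t + 1) M).2 ≤ 0))
    ∧
    (∀ η : ((ℝ × ℝ × ℝ) → ℝ × ℝ) → ℝ → ℝ,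
      (∀ y : ℕ → ℝ, ∀ t : ℕ, ∀ M ∈ 𝓜, (clState γ P η y (t + 1) M).2 ≤ 0) →
      Causal (fun t y => clU γ P η y t) ∧
        ∀ M ∈ 𝓜, FiniteGain γ P M (fun t y => clU γ P η y t)) := by
  have hgain : ∀ M ∈ 𝓜, ∀ μ, Causal μ →
      (FiniteGain γ P M μ ↔ ∀ y t, (observer γ P M (fun τ => μ τ y) y t).2 ≤ 0) :=
    fun M hM _ hμ => finiteGain_iff_pastCost_nonpos hγ.ne' (hXpos M hM) (hRic M hM) hμ
  have moreover : ∀ η : ((ℝ × ℝ × ℝ) → ℝ × ℝ) → ℝ → ℝ,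
      (∀ y t, ∀ M ∈ 𝓜, (clState γ P η y (t + 1) M).2 ≤ 0) →
      Causal (fun t y => clU γ P η y t) ∧
        ∀ M ∈ 𝓜, FiniteGain γ P M (fun t y => clU γ P η y t) := by
    refine fun η hη => ⟨causal_clU η, fun M hM => (hgain M hM _ (causal_clU η)).2 ?_⟩
    rintro y (_ | t)
    · exact le_rfl
    · exact clState_apply_eq_observer η y M (t + 1) ▸ hη y t M hM
  refine ⟨⟨fun ⟨μ, hμ, hfg⟩ => ⟨toObserverPolicy γ P μ, fun y t M hM => ?_⟩,
    fun ⟨η, hη⟩ => ⟨_, moreover η hη⟩⟩, moreover⟩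
  obtain ⟨t', y', -, hst⟩ := exists_clState_toObserverPolicy_eq hμ y (t + 1)
  rw [hst]
  exact (hgain M hM μ hμ).1 (hfg M hM) y' t'

/-- **Observer-based feedback** (Theorem 2).  (i) there is a causal output-feedback
policy rendering the closed loop finite gain for every `M ∈ 𝓜` iff (ii) there is an
observer-based policy `η` keeping every past cost `l_M(t+1)` nonpositive along every
measurement sequence.  Moreover, any `η` satisfying (ii) induces, via
`μ t y = clU γ P η y t`, a causal policy satisfying (i). -/
theorem observer_based_feedback
    (γ : ℝ) (hγ : 0 < γ) (𝓜 : Finset (ℝ × ℝ × ℝ))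
    (P : ℝ × ℝ × ℝ → ℝ)
    (hPpos : ∀ M ∈ 𝓜, 0 < P M)
    (hXpos : ∀ M ∈ 𝓜, 0 < P M + γ ^ 2 * M.2.2 ^ 2 - 1)
    (hRic : ∀ M ∈ 𝓜,
      P M = (M.1 ^ 2 / (P M + γ ^ 2 * M.2.2 ^ 2 - 1) + (γ ^ 2)⁻¹)⁻¹) :
    ((∃ μ : ℕ → (ℕ → ℝ) → ℝ, Causal μ ∧ ∀ M ∈ 𝓜, FiniteGain γ P M μ) ↔
      (∃ η : ((ℝ × ℝ × ℝ) → ℝ × ℝ) → ℝ → ℝ,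
        ∀ y : ℕ → ℝ, ∀ t : ℕ, ∀ M ∈ 𝓜, (clState γ P η y (t + 1) M).2 ≤ 0))
    ∧
    (∀ η : ((ℝ × ℝ × ℝ) → ℝ × ℝ) → ℝ → ℝ,
      (∀ y : ℕ → ℝ, ∀ t : ℕ, ∀ M ∈ 𝓜, (clState γ P η y (t + 1) M).2 ≤ 0) →
      Causal (fun t y => clU γ P η y t) ∧
        ∀ M ∈ 𝓜, FiniteGain γ P M (fun t y => clU γ P η y t)) :=
  observer_based_feedback_general γ hγ 𝓜 P hXpos hRic
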